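/- arXiv:2201.01245 — 2 statements merged into one kernel-verified Lean document; each statement's English description precedes it below -/
import Mathlib

section
/- Let α be an algebraic number with 0 < α < 1 such that N₀[α] is atomic. Then ρ(N₀[α]) = ∞. -/
/-!
For `0 < α < 1`, atomicity forces every power `αⁿ` to be an atom: a nontrivial splitting of
`αⁿ` would propagate to every `α^q = α^(q-n) αⁿ` with `q ≥ n`, yet some atom `α^e ≤ α^(n+1)`
must occur in a factorization of `α^(n+1)`. Hence a polynomial `P ∈ ℕ[X]` gives a factorization
of `P(α)` of length `P(1)`. Since `α ≠ 1` is algebraic, some `q ∈ ℤ[X]` has `q(α) = 0 ≠ q(1)`;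
splitting `q = Q - P` into nonnegative parts yields `P(α) = Q(α)` with `P(1) < Q(1)`, and the
element `P(α)^k = Q(α)^k` has factorizations of lengths `P(1)^k` and `Q(1)^k`.
-/

/-- `N₀[α]`: the additive submonoid of ℝ generated by the powers of `α`. -/
def Nmon (α : ℝ) : AddSubmonoid ℝ := AddSubmonoid.closure (Set.range fun n : ℕ => α ^ n)

/-- `a` is an atom of the submonoid `M`. -/
def IsAtomOf (M : AddSubmonoid ℝ) (a : ℝ) : Prop :=
  a ∈ M ∧ a ≠ 0 ∧ ∀ b c : ℝ, b ∈ M → c ∈ M → a = b + c → b = 0 ∨ c = 0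

/-- `M` is atomic: every nonzero element is a sum of atoms. -/
def IsAtomicM (M : AddSubmonoid ℝ) : Prop :=
  ∀ x ∈ M, x ≠ 0 → ∃ S : Multiset ℝ, (∀ a ∈ S, IsAtomOf M a) ∧ S.sum = x

/-- The set of factorization lengths of `x` in `M`. -/
def LSet (M : AddSubmonoid ℝ) (x : ℝ) : Set ℕ :=
  {n | ∃ S : Multiset ℝ, (∀ a ∈ S, IsAtomOf M a) ∧ S.sum = x ∧ Multiset.card S = n}

open Polynomial

namespace Polynomial

theorem aeval_pos_of_ne_zero {x : ℝ} (hx : 0 < x) {P : ℕ[X]} (hP : P ≠ 0) : 0 < aeval x P := by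
  rw [aeval_def, eval₂_eq_sum, sum_def]
  refine Finset.sum_pos (fun n hn => ?_) (support_nonempty.mpr hP)
  have : 0 < P.coeff n := Nat.pos_of_ne_zero (mem_support_iff.mp hn)
  rw [eq_natCast]
  positivity

theorem exists_map_sub_map_eq (q : ℤ[X]) :
    ∃ P Q : ℕ[X], P.map (algebraMap ℕ ℤ) - Q.map (algebraMap ℕ ℤ) = q := by
  induction q using Polynomial.induction_on' with
  | add p q hp hq =>
    obtain ⟨P, Q, rfl⟩ := hp
    obtain ⟨P', Q', rfl⟩ := hq
    exact ⟨P + P', Q + Q', by simp only [Polynomial.map_add]; ring⟩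
  | monomial n a =>
    refine ⟨monomial n a.toNat, monomial n (-a).toNat, ?_⟩
    rw [map_monomial, map_monomial, ← map_sub, eq_natCast, eq_natCast, Int.toNat_sub_toNat_neg]

end Polynomial

theorem IsAlgebraic.exists_aeval_eq_zero_eval_one_ne_zero {R A : Type*} [CommRing R]
    [CommRing A] [IsDomain A] [Algebra R A] {x : A} (hx : IsAlgebraic R x) (hx1 : x ≠ 1) :
    ∃ q : R[X], aeval x q = 0 ∧ q.eval 1 ≠ 0 := by
  obtain ⟨p, hp0, hpx⟩ := hx
  obtain ⟨q, hpq, hq⟩ := p.exists_eq_pow_rootMultiplicity_mul_and_not_dvd hp0 1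
  refine ⟨q, ?_, fun h => hq (dvd_iff_isRoot.mpr h)⟩
  rw [hpq, map_mul, map_pow, map_sub, aeval_X, aeval_C, map_one] at hpx
  exact (mul_eq_zero.mp hpx).resolve_left (pow_ne_zero _ (sub_ne_zero.mpr hx1))

theorem IsAlgebraic.exists_aeval_eq_aeval_eval_one_lt {A : Type*} [CommRing A] [IsDomain A]
    {x : A} (hx : IsAlgebraic ℤ x) (hx1 : x ≠ 1) :
    ∃ P Q : ℕ[X], aeval x P = aeval x Q ∧ P.eval 1 < Q.eval 1 := by
  obtain ⟨q, hqx, hq1⟩ := hx.exists_aeval_eq_zero_eval_one_ne_zero hx1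
  obtain ⟨P, Q, rfl⟩ := q.exists_map_sub_map_eq
  have hval : aeval x P = aeval x Q := by
    rwa [map_sub, aeval_map_algebraMap, aeval_map_algebraMap, sub_eq_zero] at hqx
  have hlen : P.eval 1 ≠ Q.eval 1 := by
    rw [← coe_aeval_eq_eval, map_sub, aeval_map_algebraMap, aeval_map_algebraMap, aeval_def,
      aeval_def, eval₂_at_one, eval₂_at_one, sub_ne_zero] at hq1
    exact fun h => hq1 (by rw [h])
  rcases hlen.lt_or_gt with h | h
  · exact ⟨P, Q, hval, h⟩
  · exact ⟨Q, P, hval.symm, h⟩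

theorem exists_mul_pow_lt_pow {a b : ℕ} (hab : a < b) (C : ℝ) :
    ∃ k : ℕ, C * ((a ^ k : ℕ) : ℝ) < ((b ^ k : ℕ) : ℝ) := by
  rcases Nat.eq_zero_or_pos a with rfl | ha
  · exact ⟨1, by simpa using hab⟩
  have ha' : (0 : ℝ) < a := by exact_mod_cast ha
  have hratio : (1 : ℝ) < b / a := by
    rw [one_lt_div ha']
    exact_mod_cast hab
  obtain ⟨k, hk⟩ := pow_unbounded_of_one_lt C hratio
  refine ⟨k, ?_⟩
  calc C * ((a ^ k : ℕ) : ℝ) < (b / a : ℝ) ^ k * (a : ℝ) ^ k := by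
        push_cast
        exact mul_lt_mul_of_pos_right hk (by positivity)
    _ = ((b ^ k : ℕ) : ℝ) := by
        rw [← mul_pow, div_mul_cancel₀ _ ha'.ne']
        push_cast
        rfl

theorem add_mem_LSet {M : AddSubmonoid ℝ} {x y : ℝ} {l m : ℕ} (hl : l ∈ LSet M x)
    (hm : m ∈ LSet M y) : l + m ∈ LSet M (x + y) := by
  obtain ⟨S, hS, rfl, rfl⟩ := hl
  obtain ⟨T, hT, rfl, rfl⟩ := hm
  refine ⟨S + T, fun a ha => ?_, Multiset.sum_add S T, Multiset.card_add S T⟩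
  rcases Multiset.mem_add.mp ha with ha | ha
  exacts [hS a ha, hT a ha]

namespace Nmon

variable {α : ℝ}

theorem pow_mem (n : ℕ) : α ^ n ∈ Nmon α :=
  AddSubmonoid.subset_closure ⟨n, rfl⟩

theorem nonneg (h0 : 0 ≤ α) {x : ℝ} (hx : x ∈ Nmon α) : 0 ≤ x := by
  induction hx using AddSubmonoid.closure_induction with
  | mem y hy =>
    obtain ⟨n, rfl⟩ := hy
    positivity
  | zero => exact le_rfl
  | add x y _ _ hx hy => exact add_nonneg hx hy

theorem pow_mul_mem (t : ℕ) {x : ℝ} (hx : x ∈ Nmon α) : α ^ t * x ∈ Nmon α := by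
  induction hx using AddSubmonoid.closure_induction with
  | mem y hy =>
    obtain ⟨n, rfl⟩ := hy
    rw [← pow_add]
    exact pow_mem _
  | zero => rw [mul_zero]; exact (Nmon α).zero_mem
  | add x y _ _ hx hy => rw [mul_add]; exact add_mem hx hy

theorem aeval_mem (P : ℕ[X]) : aeval α P ∈ Nmon α := by
  induction P using Polynomial.induction_on' with
  | add P Q hP hQ => simpa using add_mem hP hQ
  | monomial n c =>
    rw [aeval_monomial, eq_natCast, ← nsmul_eq_mul]
    exact AddSubmonoid.nsmul_mem _ (pow_mem n) c

theorem exists_eq_pow_add {x : ℝ} (hx : x ∈ Nmon α) (hx0 : x ≠ 0) :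
    ∃ e : ℕ, ∃ y ∈ Nmon α, x = α ^ e + y := by
  induction hx using AddSubmonoid.closure_induction with
  | mem y hy =>
    obtain ⟨n, rfl⟩ := hy
    exact ⟨n, 0, (Nmon α).zero_mem, (add_zero _).symm⟩
  | zero => exact absurd rfl hx0
  | add x y hx hy ihx ihy =>
    by_cases hx0' : x = 0
    · subst hx0'
      rw [zero_add] at hx0 ⊢
      exact ihy hx0
    · obtain ⟨e, z, hz, rfl⟩ := ihx hx0'
      exact ⟨e, z + y, add_mem hz hy, add_assoc _ _ _⟩

theorem eq_pow_of_isAtomOf (h0 : α ≠ 0) {a : ℝ} (ha : IsAtomOf (Nmon α) a) :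
    ∃ e : ℕ, a = α ^ e := by
  obtain ⟨e, y, hy, rfl⟩ := exists_eq_pow_add ha.1 ha.2.1
  rcases ha.2.2 _ _ (pow_mem e) hy rfl with h | rfl
  · exact absurd h (pow_ne_zero e h0)
  · exact ⟨e, add_zero _⟩

theorem isAtomOf_pow_of_le (h0 : α ≠ 0) {n q : ℕ} (hnq : n ≤ q)
    (hq : IsAtomOf (Nmon α) (α ^ q)) : IsAtomOf (Nmon α) (α ^ n) := by
  refine ⟨pow_mem n, pow_ne_zero n h0, fun b c hb hc hbc => ?_⟩
  have hsplit : α ^ q = α ^ (q - n) * b + α ^ (q - n) * c := by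
    rw [← mul_add, ← hbc, ← pow_add, Nat.sub_add_cancel hnq]
  have hpow : α ^ (q - n) ≠ 0 := pow_ne_zero _ h0
  exact (hq.2.2 _ _ (pow_mul_mem _ hb) (pow_mul_mem _ hc) hsplit).imp
    (fun h => (mul_eq_zero.mp h).resolve_left hpow) (fun h => (mul_eq_zero.mp h).resolve_left hpow)

theorem isAtomOf_pow (h0 : 0 < α) (h1 : α < 1) (hat : IsAtomicM (Nmon α)) (n : ℕ) :
    IsAtomOf (Nmon α) (α ^ n) := by
  obtain ⟨S, hS, hsum⟩ := hat _ (pow_mem (n + 1)) (pow_pos h0 _).ne'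
  obtain ⟨a, ha⟩ : ∃ a, a ∈ S := by
    by_contra! hS0
    rw [Multiset.eq_zero_of_forall_notMem hS0, Multiset.sum_zero] at hsum
    exact (pow_pos h0 _).ne' hsum.symm
  obtain ⟨e, rfl⟩ := eq_pow_of_isAtomOf h0.ne' (hS a ha)
  have hle : α ^ e ≤ α ^ (n + 1) :=
    hsum ▸ Multiset.single_le_sum (fun b hb => nonneg h0.le (hS b hb).1) _ ha
  have hne : n ≤ e := by
    have := (pow_le_pow_iff_right_of_lt_one₀ h0 h1).mp hle
    omega
  exact isAtomOf_pow_of_le h0.ne' hne (hS _ ha)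

theorem eval_one_mem_LSet (hatom : ∀ n : ℕ, IsAtomOf (Nmon α) (α ^ n)) (P : ℕ[X]) :
    P.eval 1 ∈ LSet (Nmon α) (aeval α P) := by
  induction P using Polynomial.induction_on' with
  | add P Q hP hQ => simpa using add_mem_LSet hP hQ
  | monomial n c =>
    refine ⟨Multiset.replicate c (α ^ n), fun a ha => ?_, ?_, ?_⟩
    · rw [Multiset.eq_of_mem_replicate ha]
      exact hatom n
    · simp [aeval_monomial]
    · simp

end Nmon

/-- For a positive algebraic `α` with `N₀[α]` atomic with `0 < α < 1`, the
elasticity of `N₀[α]` is infinite: length ratios are unbounded. -/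
theorem stmt9 (α : ℝ) (h0 : 0 < α) (h1 : α < 1) (halg : IsAlgebraic ℚ α)
    (hat : IsAtomicM (Nmon α)) :
    ∀ C : ℝ, ∃ x ∈ Nmon α, x ≠ 0 ∧ ∃ l L : ℕ,
      l ∈ LSet (Nmon α) x ∧ L ∈ LSet (Nmon α) x ∧ C * l < L := by
  intro C
  have halgZ : IsAlgebraic ℤ α := (IsFractionRing.isAlgebraic_iff ℤ ℚ ℝ).mpr halg
  obtain ⟨P, Q, hval, hlt⟩ := halgZ.exists_aeval_eq_aeval_eval_one_lt h1.ne
  have hQ : Q ≠ 0 := by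
    rintro rfl
    simp at hlt
  have hatom := Nmon.isAtomOf_pow h0 h1 hat
  obtain ⟨k, hk⟩ := exists_mul_pow_lt_pow hlt C
  refine ⟨aeval α (Q ^ k), Nmon.aeval_mem _, (aeval_pos_of_ne_zero h0 (pow_ne_zero k hQ)).ne',
    (P ^ k).eval 1, (Q ^ k).eval 1, ?_, Nmon.eval_one_mem_LSet hatom _, ?_⟩
  · rw [map_pow, ← hval, ← map_pow]
    exact Nmon.eval_one_mem_LSet hatom _
  · rwa [eval_pow, eval_pow]
end

section
/- Let q ∈ ℚ_{>1} \ ℕ and let s > t ≥ 1 be coprime positive integers. If there exists a nonzero β ∈ N₀[q] with ℓ = min L(β) and L = max L(β) such that (s−t) divides t·L − s·ℓ in ℕ, then there exists a nonzero β' ∈ N₀[q] with ρ(β') = s/t. -/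
/-!
Write `D > 1` for the denominator of `q`. The value at `q` of a polynomial of degree `≤ k` lies in
`D⁻ᵏ ℤ`, whereas `q ^ (k + 1) = num ^ (k + 1) / D ^ (k + 1)` does not, since `D ∤ num ^ (k + 1)`.
Choose `N` with `q ^ N > β` and `N` beyond the degree of a factorization of `β`. Comparing
denominators shows that every factorization of `β + q ^ N` contains the atom `q ^ N`, so removing
it is a bijection onto the factorizations of `β` and `L(β + q ^ N) = L(β) + 1`. Doing this `d`
times, where `t L - s ℓ = (s - t) d`, gives a `β'` with `ρ(β') = (L + d) / (ℓ + d) = s / t`.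
-/

open Polynomial

/-- `N₀[q]`: the additive submonoid of ℚ generated by the powers of `q`. -/
def NmonQ (q : ℚ) : AddSubmonoid ℚ := AddSubmonoid.closure (Set.range fun n : ℕ => q ^ n)

/-- Evaluation of a polynomial with ℕ-coefficients at a rational number. -/
def pevQ (q : ℚ) (f : Polynomial ℕ) : ℚ := Polynomial.eval₂ (Nat.castRingHom ℚ) q f

/-- Lengths of factorizations of `x` in `N₀[q]`. -/
def LSetQ (q : ℚ) (x : ℚ) : Set ℕ :=
  {n | ∃ f : Polynomial ℕ, pevQ q f = x ∧ f.eval 1 = n}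

section Evaluation

variable (q : ℚ)

lemma pevQ_add (f g : ℕ[X]) : pevQ q (f + g) = pevQ q f + pevQ q g :=
  eval₂_add _ _

lemma pevQ_X_pow (n : ℕ) : pevQ q (X ^ n) = q ^ n := by
  simp [pevQ]

lemma pevQ_eq_sum_range (f : ℕ[X]) :
    pevQ q f = ∑ i ∈ Finset.range (f.natDegree + 1), (f.coeff i : ℚ) * q ^ i :=
  eval₂_eq_sum_range _ _

lemma pevQ_eq_leadingCoeff_mul_add_pevQ_eraseLead (f : ℕ[X]) :
    pevQ q f = f.leadingCoeff * q ^ f.natDegree + pevQ q f.eraseLead := by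
  conv_lhs => rw [← f.eraseLead_add_C_mul_X_pow]
  simp [pevQ, add_comm]

lemma pevQ_mem_NmonQ (f : ℕ[X]) : pevQ q f ∈ NmonQ q := by
  rw [pevQ_eq_sum_range]
  refine AddSubmonoid.sum_mem _ fun i _ => ?_
  rw [← nsmul_eq_mul]
  exact AddSubmonoid.nsmul_mem _ (AddSubmonoid.subset_closure (Set.mem_range_self i)) _

end Evaluation

lemma pevQ_nonneg {q : ℚ} (hq : 0 ≤ q) (f : ℕ[X]) : 0 ≤ pevQ q f := by
  rw [pevQ_eq_sum_range]
  exact Finset.sum_nonneg fun i _ => by positivity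

lemma Polynomial.eval_one_pos_of_ne_zero {f : ℕ[X]} (hf : f ≠ 0) : 0 < f.eval 1 := by
  rw [← f.eraseLead_add_C_mul_X_pow]
  simpa using Nat.add_pos_right _ (Nat.pos_of_ne_zero (leadingCoeff_ne_zero.mpr hf))

section LengthSet

variable {q x : ℚ} {n : ℕ}

lemma mem_NmonQ_of_mem_LSetQ (h : n ∈ LSetQ q x) : x ∈ NmonQ q := by
  obtain ⟨f, rfl, -⟩ := h
  exact pevQ_mem_NmonQ q f

lemma pos_of_mem_LSetQ (hx : x ≠ 0) (h : n ∈ LSetQ q x) : 0 < n := by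
  obtain ⟨f, rfl, rfl⟩ := h
  refine eval_one_pos_of_ne_zero fun hf => hx ?_
  simp [hf, pevQ]

lemma ne_zero_of_isLeast_LSetQ (h : IsLeast (LSetQ q x) n) (hn : n ≠ 0) : x ≠ 0 := by
  rintro rfl
  exact hn (Nat.le_zero.mp (h.2 ⟨0, by simp [pevQ], eval_zero⟩))

end LengthSet

lemma Rat.den_ne_one_of_forall_ne_natCast {q : ℚ} (h0 : 0 ≤ q) (hq : ¬ ∃ n : ℕ, q = n) :
    q.den ≠ 1 := by
  intro hden
  refine hq ⟨q.num.toNat, ?_⟩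
  rw [← Rat.coe_int_num_of_den_eq_one hden]
  exact_mod_cast (Int.toNat_of_nonneg (Rat.num_nonneg.mpr h0)).symm

/-- The lattice `(1 / den q ^ k) ℤ`. -/
def denPowLattice (q : ℚ) (k : ℕ) : AddSubgroup ℚ :=
  (Int.castAddHom ℚ).range.comap (AddMonoidHom.mulLeft ((q.den : ℚ) ^ k))

section DenPowLattice

variable {q : ℚ} {k m : ℕ}

lemma mem_denPowLattice {x : ℚ} : x ∈ denPowLattice q k ↔ ∃ z : ℤ, (z : ℚ) = q.den ^ k * x := by
  simp only [denPowLattice, AddSubgroup.mem_comap, AddMonoidHom.mem_range]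
  rfl

lemma denPowLattice_mono (h : k ≤ m) : denPowLattice q k ≤ denPowLattice q m := by
  intro x hx
  obtain ⟨z, hz⟩ := mem_denPowLattice.mp hx
  refine mem_denPowLattice.mpr ⟨q.den ^ (m - k) * z, ?_⟩
  rw [← Nat.sub_add_cancel h, pow_add, Nat.add_sub_cancel]
  push_cast
  rw [hz, mul_assoc]

lemma pow_mem_denPowLattice {i : ℕ} (h : i ≤ k) : q ^ i ∈ denPowLattice q k := by
  refine denPowLattice_mono h (mem_denPowLattice.mpr ⟨q.num ^ i, ?_⟩)
  rw [← mul_pow, mul_comm, Rat.mul_den_eq_num]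
  push_cast
  rfl

lemma pevQ_mem_denPowLattice {f : ℕ[X]} (h : f.natDegree ≤ k) : pevQ q f ∈ denPowLattice q k := by
  rw [pevQ_eq_sum_range]
  refine AddSubgroup.sum_mem _ fun i hi => ?_
  rw [← nsmul_eq_mul]
  exact AddSubgroup.nsmul_mem _
    (pow_mem_denPowLattice (Nat.le_trans (Nat.le_of_lt_succ (Finset.mem_range.mp hi)) h)) _

lemma pow_succ_notMem_denPowLattice (hden : q.den ≠ 1) (k : ℕ) :
    q ^ (k + 1) ∉ denPowLattice q k := by
  rintro hmem
  obtain ⟨z, hz⟩ := mem_denPowLattice.mp hmem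
  have hnum : (q.num : ℚ) ^ (k + 1) = z * q.den := by
    rw [hz, ← Rat.mul_den_eq_num, mul_pow, pow_succ]
    ring
  have hdvd : q.den ∣ q.num.natAbs ^ (k + 1) := by
    rw [← Int.natAbs_pow, ← Int.natCast_dvd]
    exact ⟨z, by rw [mul_comm]; exact_mod_cast hnum⟩
  exact hden (Nat.Coprime.eq_one_of_dvd (q.reduced.pow_left _).symm hdvd)

end DenPowLattice

section Shift

variable {q : ℚ}

lemma natDegree_le_of_pevQ_mem_denPowLattice (h1 : 1 ≤ q) (hden : q.den ≠ 1) {f : ℕ[X]} {N : ℕ}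
    (hmem : pevQ q f ∈ denPowLattice q N) (hlt : pevQ q f < 2 * q ^ N) : f.natDegree ≤ N := by
  by_contra! hN
  obtain ⟨m, hm⟩ : ∃ m, f.natDegree = m + 1 := Nat.exists_eq_succ_of_ne_zero (by omega)
  have hf0 : f ≠ 0 := by rintro rfl; simp at hN
  have hsplit := pevQ_eq_leadingCoeff_mul_add_pevQ_eraseLead q f
  have hlead : f.leadingCoeff = 1 := by
    have hle : (f.leadingCoeff : ℚ) * q ^ f.natDegree < 2 * q ^ f.natDegree :=
      calc (f.leadingCoeff : ℚ) * q ^ f.natDegree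
          ≤ pevQ q f := by linarith [pevQ_nonneg (zero_le_one.trans h1) f.eraseLead]
        _ < 2 * q ^ N := hlt
        _ ≤ 2 * q ^ f.natDegree := by gcongr
    have : f.leadingCoeff < 2 := by
      exact_mod_cast lt_of_mul_lt_mul_right hle (by positivity)
    have := leadingCoeff_ne_zero.mpr hf0
    omega
  have herase : pevQ q f.eraseLead ∈ denPowLattice q m :=
    pevQ_mem_denPowLattice (by have := f.eraseLead_natDegree_le; omega)
  apply pow_succ_notMem_denPowLattice hden m
  have : q ^ (m + 1) = pevQ q f - pevQ q f.eraseLead := by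
    rw [hsplit, hlead, hm]; ring
  rw [this]
  exact sub_mem (denPowLattice_mono (by omega) hmem) herase

lemma exists_eq_add_X_pow_of_coeff_ne_zero {f : ℕ[X]} {n : ℕ} (h : f.coeff n ≠ 0) :
    ∃ g, f = g + X ^ n := by
  obtain ⟨c, hc⟩ := Nat.exists_eq_succ_of_ne_zero h
  refine ⟨monomial n c + f.erase n, ?_⟩
  conv_lhs => rw [← f.monomial_add_erase n, hc, Nat.succ_eq_add_one, map_add,
    ← X_pow_eq_monomial]
  ring

lemma LSetQ_add_pow_eq_image {x : ℚ} {N : ℕ}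
    (hcoeff : ∀ f : ℕ[X], pevQ q f = x + q ^ N → f.coeff N ≠ 0) :
    LSetQ q (x + q ^ N) = (· + 1) '' LSetQ q x := by
  ext n
  constructor
  · rintro ⟨f, hf, rfl⟩
    obtain ⟨g, rfl⟩ := exists_eq_add_X_pow_of_coeff_ne_zero (hcoeff f hf)
    rw [pevQ_add, pevQ_X_pow, add_left_inj] at hf
    exact ⟨g.eval 1, ⟨g, hf, rfl⟩, by simp⟩
  · rintro ⟨_, ⟨g, rfl, rfl⟩, rfl⟩
    exact ⟨g + X ^ N, by rw [pevQ_add, pevQ_X_pow], by simp⟩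

lemma exists_LSetQ_add_pow_eq_image (h1 : 1 < q) (hden : q.den ≠ 1) {x : ℚ}
    (hx : (LSetQ q x).Nonempty) : ∃ N, LSetQ q (x + q ^ N) = (· + 1) '' LSetQ q x := by
  obtain ⟨_, f, rfl, -⟩ := hx
  obtain ⟨N₀, hN₀⟩ := pow_unbounded_of_one_lt (pevQ q f) h1
  set n := max N₀ f.natDegree
  have hlt : pevQ q f < q ^ (n + 1) :=
    hN₀.trans_le (pow_le_pow_right₀ h1.le (by omega))
  have hfmem : pevQ q f ∈ denPowLattice q n := pevQ_mem_denPowLattice (le_max_right _ _)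
  refine ⟨n + 1, LSetQ_add_pow_eq_image fun g hg hcoeff => ?_⟩
  have hdeg : g.natDegree ≤ n + 1 := by
    refine natDegree_le_of_pevQ_mem_denPowLattice h1.le hden ?_ (by rw [hg]; linarith)
    rw [hg]
    exact add_mem (denPowLattice_mono n.le_succ hfmem) (pow_mem_denPowLattice le_rfl)
  have hdeg' : g.natDegree ≤ n := by
    rw [natDegree_le_iff_coeff_eq_zero] at hdeg ⊢
    intro i hi
    rcases (Nat.succ_le_of_lt hi).eq_or_lt with rfl | hi'
    exacts [hcoeff, hdeg i hi']
  apply pow_succ_notMem_denPowLattice hden n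
  rw [eq_sub_of_add_eq' hg.symm]
  exact sub_mem (pevQ_mem_denPowLattice hdeg') hfmem

lemma exists_LSetQ_eq_image_add (h1 : 1 < q) (hden : q.den ≠ 1) {x : ℚ}
    (hx : (LSetQ q x).Nonempty) (d : ℕ) : ∃ y, LSetQ q y = (· + d) '' LSetQ q x := by
  induction d with
  | zero => exact ⟨x, by simp⟩
  | succ d ih =>
    obtain ⟨y, hy⟩ := ih
    obtain ⟨N, hN⟩ := exists_LSetQ_add_pow_eq_image h1 hden (hy ▸ hx.image _)
    refine ⟨y + q ^ N, ?_⟩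
    rw [hN, hy, Set.image_image]
    simp only [add_assoc]

end Shift

theorem stmt18_general (q : ℚ) (h1 : 1 < q) (hq : ¬ ∃ n : ℕ, q = (n : ℚ))
    (s t : ℕ) (ht : 1 ≤ t)
    (β : ℚ) (hβ0 : β ≠ 0) (ℓ L : ℕ)
    (hℓ : IsLeast (LSetQ q β) ℓ) (hL : IsGreatest (LSetQ q β) L)
    (hdvd : ∃ d : ℕ, (t : ℤ) * L - (s : ℤ) * ℓ = ((s : ℤ) - t) * d) :
    ∃ β' ∈ NmonQ q, β' ≠ 0 ∧ ∃ l' L' : ℕ,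
      IsLeast (LSetQ q β') l' ∧ IsGreatest (LSetQ q β') L' ∧
      (L' : ℚ) / (l' : ℚ) = (s : ℚ) / (t : ℚ) := by
  obtain ⟨d, hd⟩ := hdvd
  have hden := Rat.den_ne_one_of_forall_ne_natCast (zero_le_one.trans h1.le) hq
  obtain ⟨β', hβ'⟩ := exists_LSetQ_eq_image_add h1 hden ⟨ℓ, hℓ.1⟩ d
  have hℓ' : IsLeast (LSetQ q β') (ℓ + d) :=
    hβ' ▸ (add_left_strictMono (a := d)).map_isLeast.mpr hℓ
  have hL' : IsGreatest (LSetQ q β') (L + d) :=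
    hβ' ▸ (add_left_strictMono (a := d)).map_isGreatest.mpr hL
  have hℓpos : 0 < ℓ := pos_of_mem_LSetQ hβ0 hℓ.1
  refine ⟨β', mem_NmonQ_of_mem_LSetQ hℓ'.1, ne_zero_of_isLeast_LSetQ hℓ' (by omega),
    ℓ + d, L + d, hℓ', hL', ?_⟩
  rw [div_eq_div_iff (by positivity) (by positivity)]
  have : ((L + d : ℕ) : ℤ) * t = s * (ℓ + d : ℕ) := by push_cast; linear_combination hd
  exact_mod_cast this

/-- Let `q ∈ ℚ_{>1} \ ℕ` and coprime integers `s > t ≥ 1`. If some nonzero `β ∈ N₀[q]`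
with `ℓ = min L(β)`, `L = max L(β)` satisfies `(s − t) ∣ (t·L − s·ℓ)` in ℕ, then some
nonzero `β' ∈ N₀[q]` has elasticity exactly `s/t`. -/
theorem stmt18 (q : ℚ) (h1 : 1 < q) (hq : ¬ ∃ n : ℕ, q = (n : ℚ))
    (s t : ℕ) (ht : 1 ≤ t) (hst : t < s) (hco : Nat.Coprime s t)
    (β : ℚ) (hβ : β ∈ NmonQ q) (hβ0 : β ≠ 0) (ℓ L : ℕ)
    (hℓ : IsLeast (LSetQ q β) ℓ) (hL : IsGreatest (LSetQ q β) L)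
    (hdvd : ∃ d : ℕ, (t : ℤ) * L - (s : ℤ) * ℓ = ((s : ℤ) - t) * d) :
    ∃ β' ∈ NmonQ q, β' ≠ 0 ∧ ∃ l' L' : ℕ,
      IsLeast (LSetQ q β') l' ∧ IsGreatest (LSetQ q β') L' ∧
      (L' : ℚ) / (l' : ℚ) = (s : ℚ) / (t : ℚ) :=
  stmt18_general q h1 hq s t ht β hβ0 ℓ L hℓ hL hdvd
end
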